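/- arXiv:1510.02825 — 4 statements merged into one kernel-verified Lean document; each statement's English description precedes it below -/
import Mathlib

section
/- Let f : [0,T] → ℝ be continuous on [0,T] and continuously differentiable on (0,T], and suppose f attains its minimum over [0,T] at a point t₀ ∈ (0,T]. Then for every α ∈ (0,1), the Caputo fractional derivative of f at t₀, namely (1/Γ(1-α)) ∫_0^{t₀} (t₀-s)^{-α} f'(s) ds, is nonpositive, provided the integral converges. -/
/-!
Integrating by parts against the nondecreasing kernel `φ s = (t₀ - s) ^ (-α)` on `[0, x]`,
`x < t₀`, and using `f ≥ f t₀` gives `∫₀ˣ φ f' ≤ φ x * (f x - f t₀)`. As `φ x ≤ φ s` on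
`[x, t₀)`, the right-hand side is at most `∫ₓ^{t₀} |φ f'|`, which tends to `0` as `x → t₀⁻`,
while the left-hand side tends to the Caputo integral.
-/

open MeasureTheory Set intervalIntegral

theorem IntervalIntegrable.of_sub_rpow_neg_mul {g : ℝ → ℝ} {a b c α : ℝ} (hα : 0 ≤ α)
    (ha : a ≤ c) (hb : b ≤ c)
    (h : IntervalIntegrable (fun s => (c - s) ^ (-α) * g s) volume a b) :
    IntervalIntegrable g volume a b := by
  have hcont : Continuous fun s : ℝ => (c - s) ^ α :=
    (Real.continuous_rpow_const hα).comp (continuous_sub_left c)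
  refine (h.continuousOn_mul hcont.continuousOn).congr_uIoo fun s hs => ?_
  have hs : 0 < c - s := sub_pos.2 (hs.2.trans_le (max_le ha hb))
  simp only [← mul_assoc, ← Real.rpow_add hs, add_neg_cancel, Real.rpow_zero, one_mul]

theorem integral_mul_deriv_le_mul_sub_of_le {φ φ' f f' : ℝ → ℝ} {a b m : ℝ} (hab : a ≤ b)
    (hφ : ContinuousOn φ (Icc a b)) (hφφ' : ∀ s ∈ Ioo a b, HasDerivAt φ (φ' s) s)
    (hφ'_nonneg : ∀ s ∈ Icc a b, 0 ≤ φ' s) (hφ'_int : IntervalIntegrable φ' volume a b)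
    (hφa : 0 ≤ φ a) (hf : ContinuousOn f (Icc a b)) (hff' : ∀ s ∈ Ioo a b, HasDerivAt f (f' s) s)
    (hf'_int : IntervalIntegrable f' volume a b) (hm : ∀ s ∈ Icc a b, m ≤ f s) :
    ∫ s in a..b, φ s * f' s ≤ φ b * (f b - m) := by
  have hIcc : uIcc a b = Icc a b := uIcc_of_le hab
  have hIoo : Ioo (min a b) (max a b) = Ioo a b := by rw [min_eq_left hab, max_eq_right hab]
  have hparts := integral_mul_deriv_eq_deriv_mul_of_hasDerivAt (hIcc ▸ hφ) (hIcc ▸ hf)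
    (hIoo ▸ hφφ') (hIoo ▸ hff') hφ'_int hf'_int
  have hlower : (φ b - φ a) * m ≤ ∫ s in a..b, φ' s * f s := by
    rw [← integral_eq_sub_of_hasDerivAt_of_le hab hφ hφφ' hφ'_int,
      ← intervalIntegral.integral_mul_const]
    exact integral_mono_on hab (hφ'_int.mul_const m) (hφ'_int.mul_continuousOn (hIcc ▸ hf))
      fun s hs => mul_le_mul_of_nonneg_left (hm s hs) (hφ'_nonneg s hs)
  have hma : 0 ≤ φ a * (f a - m) := mul_nonneg hφa (sub_nonneg.2 (hm a (left_mem_Icc.2 hab)))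
  rw [hparts]
  linarith

theorem mul_sub_le_integral_abs_mul {φ f f' : ℝ → ℝ} {a b : ℝ} (hab : a ≤ b)
    (hφ : ∀ s ∈ Ioo a b, φ a ≤ φ s) (hφa : 0 ≤ φ a) (hf : ContinuousOn f (Icc a b))
    (hff' : ∀ s ∈ Ioo a b, HasDerivAt f (f' s) s) (hf'_int : IntervalIntegrable f' volume a b)
    (hφf'_int : IntervalIntegrable (fun s => φ s * f' s) volume a b) :
    φ a * (f a - f b) ≤ ∫ s in a..b, |φ s * f' s| := calc
  φ a * (f a - f b) = φ a * -∫ s in a..b, f' s := by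
    rw [integral_eq_sub_of_hasDerivAt_of_le hab hf hff' hf'_int, neg_sub]
  _ ≤ φ a * ∫ s in a..b, |f' s| :=
    mul_le_mul_of_nonneg_left ((neg_le_abs _).trans (abs_integral_le_integral_abs hab)) hφa
  _ = ∫ s in a..b, φ a * |f' s| := (intervalIntegral.integral_const_mul _ _).symm
  _ ≤ ∫ s in a..b, |φ s * f' s| :=
    integral_mono_on_of_le_Ioo hab (hf'_int.abs.const_mul _) hφf'_int.abs fun s hs => by
      rw [abs_mul]
      exact mul_le_mul_of_nonneg_right ((hφ s hs).trans (le_abs_self _)) (abs_nonneg _)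

theorem integral_nonpos_of_forall_integral_le_integral_tail {f g : ℝ → ℝ} {a b : ℝ} (hab : a < b)
    (hf : IntervalIntegrable f volume a b) (hg : IntervalIntegrable g volume a b)
    (h : ∀ x ∈ Ioo a b, ∫ s in a..x, f s ≤ ∫ s in x..b, g s) :
    ∫ s in a..b, f s ≤ 0 := by
  have hb : b ∈ uIcc a b := right_mem_uIcc
  have hIoo : Ioo a b ⊆ uIcc a b := uIcc_of_le hab.le ▸ Ioo_subset_Icc_self
  have hF := ((continuousOn_primitive_interval' hf left_mem_uIcc).continuousWithinAt hb).mono hIoo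
  have hG := ((continuousOn_primitive_interval_left
    ((intervalIntegrable_iff').1 hg)).continuousWithinAt hb).mono hIoo
  have := right_nhdsWithin_Ioo_neBot hab
  simpa using le_of_tendsto_of_tendsto hF.tendsto hG.tendsto (eventually_nhdsWithin_of_forall h)

theorem hasDerivAt_sub_rpow_neg {c α s : ℝ} (hs : s < c) :
    HasDerivAt (fun s => (c - s) ^ (-α)) (α * (c - s) ^ (-α - 1)) s := by
  convert ((hasDerivAt_id' s).const_sub c).rpow_const (p := -α) (Or.inl (sub_pos.2 hs).ne')
    using 1
  ring

theorem integral_sub_rpow_neg_mul_deriv_le {f f' : ℝ → ℝ} {a x c α m : ℝ} (hα : 0 ≤ α)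
    (hax : a ≤ x) (hxc : x < c) (hf : ContinuousOn f (Icc a x))
    (hff' : ∀ s ∈ Ioo a x, HasDerivAt f (f' s) s) (hf'_int : IntervalIntegrable f' volume a x)
    (hm : ∀ s ∈ Icc a x, m ≤ f s) :
    ∫ s in a..x, (c - s) ^ (-α) * f' s ≤ (c - x) ^ (-α) * (f x - m) := by
  have hpos : ∀ s ∈ Icc a x, 0 < c - s := fun s hs => sub_pos.2 (hs.2.trans_lt hxc)
  have hφ : ∀ s ∈ Icc a x, HasDerivAt (fun s => (c - s) ^ (-α)) (α * (c - s) ^ (-α - 1)) s :=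
    fun s hs => hasDerivAt_sub_rpow_neg (hs.2.trans_lt hxc)
  have hφ'_cont : ContinuousOn (fun s => α * (c - s) ^ (-α - 1)) (Icc a x) :=
    continuousOn_const.mul <| (continuousOn_const.sub continuousOn_id).rpow_const
      fun s hs => Or.inl (hpos s hs).ne'
  exact integral_mul_deriv_le_mul_sub_of_le hax
    (fun s hs => (hφ s hs).continuousAt.continuousWithinAt)
    (fun s hs => hφ s (Ioo_subset_Icc_self hs))
    (fun s hs => mul_nonneg hα (Real.rpow_nonneg (hpos s hs).le _))
    (hφ'_cont.mono (uIcc_of_le hax).subset).intervalIntegrable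
    (Real.rpow_nonneg (hpos a (left_mem_Icc.2 hax)).le _) hf hff' hf'_int hm

theorem caputo_deriv_nonpos_at_min_general (T t₀ α : ℝ) (f : ℝ → ℝ)
    (hα : α ∈ Set.Ioo (0:ℝ) 1)
    (hcont : ContinuousOn f (Set.Icc 0 T))
    (hderiv : ∀ t ∈ Set.Ioc (0:ℝ) T, HasDerivAt f (deriv f t) t)
    (ht₀ : t₀ ∈ Set.Ioc (0:ℝ) T)
    (hmin : ∀ t ∈ Set.Icc (0:ℝ) T, f t₀ ≤ f t)
    (hint : IntervalIntegrable (fun s => (t₀ - s) ^ (-α) * deriv f s) volume 0 t₀) :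
    (1 / Real.Gamma (1 - α)) * ∫ s in (0:ℝ)..t₀, (t₀ - s) ^ (-α) * deriv f s ≤ 0 := by
  obtain ⟨hα0, hα1⟩ := hα
  obtain ⟨ht₀0, ht₀T⟩ := ht₀
  have hΓ : 0 < Real.Gamma (1 - α) := Real.Gamma_pos_of_pos (sub_pos.2 hα1)
  have hG : IntervalIntegrable (deriv f) volume 0 t₀ :=
    hint.of_sub_rpow_neg_mul hα0.le ht₀0.le le_rfl
  refine mul_nonpos_of_nonneg_of_nonpos (one_div_pos.2 hΓ).le ?_
  refine integral_nonpos_of_forall_integral_le_integral_tail ht₀0 hint hint.abs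
    fun x ⟨hx0, hxt₀⟩ => ?_
  have hx : x ∈ uIcc 0 t₀ := (uIcc_of_le ht₀0.le).symm ▸ ⟨hx0.le, hxt₀.le⟩
  calc ∫ s in (0:ℝ)..x, (t₀ - s) ^ (-α) * deriv f s ≤ (t₀ - x) ^ (-α) * (f x - f t₀) :=
        integral_sub_rpow_neg_mul_deriv_le hα0.le hx0.le hxt₀
          (hcont.mono (Icc_subset_Icc_right (hxt₀.le.trans ht₀T)))
          (fun s hs => hderiv s ⟨hs.1, (hs.2.trans hxt₀).le.trans ht₀T⟩)
          (hG.mono_set (uIcc_subset_uIcc_left hx))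
          (fun s hs => hmin s ⟨hs.1, hs.2.trans (hxt₀.le.trans ht₀T)⟩)
    _ ≤ ∫ s in x..t₀, |(t₀ - s) ^ (-α) * deriv f s| :=
        mul_sub_le_integral_abs_mul (φ := fun s => (t₀ - s) ^ (-α)) hxt₀.le
          (fun s hs => Real.rpow_le_rpow_of_nonpos (sub_pos.2 hs.2) (sub_le_sub_left hs.1.le t₀)
            (neg_nonpos.2 hα0.le))
          (Real.rpow_nonneg (sub_pos.2 hxt₀).le _)
          (hcont.mono (Icc_subset_Icc hx0.le ht₀T))
          (fun s hs => hderiv s ⟨hx0.trans hs.1, hs.2.le.trans ht₀T⟩)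
          (hG.mono_set (uIcc_subset_uIcc_right hx))
          (hint.mono_set (uIcc_subset_uIcc_right hx))

theorem caputo_deriv_nonpos_at_min (T t₀ α : ℝ) (f : ℝ → ℝ) (hT : 0 < T)
    (hα : α ∈ Set.Ioo (0:ℝ) 1)
    (hcont : ContinuousOn f (Set.Icc 0 T))
    (hderiv : ∀ t ∈ Set.Ioc (0:ℝ) T, HasDerivAt f (deriv f t) t)
    (hC1 : ContinuousOn (deriv f) (Set.Ioc 0 T))
    (ht₀ : t₀ ∈ Set.Ioc (0:ℝ) T)
    (hmin : ∀ t ∈ Set.Icc (0:ℝ) T, f t₀ ≤ f t)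
    (hint : IntervalIntegrable (fun s => (t₀ - s) ^ (-α) * deriv f s) volume 0 t₀) :
    (1 / Real.Gamma (1 - α)) * ∫ s in (0:ℝ)..t₀, (t₀ - s) ^ (-α) * deriv f s ≤ 0 :=
  caputo_deriv_nonpos_at_min_general T t₀ α f hα hcont hderiv ht₀ hmin hint
end

section
/- Let H be a real N×N matrix, ω₀ > 0, and suppose (ω₀ I + H)^{-1} exists and has all entries nonnegative. Let {ω_j}_{j≥0} be real numbers with ω_j < 0 for j ≥ 1 and ∑_{j=0}^n ω_j > 0 for all n ≥ 1. Define the sequence U^0 = V and U^n = (ω₀ I + H)^{-1}( (∑_{j=0}^{n-1} ω_j) V - ∑_{j=1}^{n-1} ω_{n-j} U^j ) for n ≥ 1. Then V ≥ 0 (elementwise) implies U^n ≥ 0 for all n ≥ 0. -/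
/-!
By strong induction: the vector inside the resolvent is a positive multiple of `V` minus
combinations of earlier iterates with the negative weights `ω (n - j)`, hence nonnegative, and the
resolvent `(ω 0 • 1 + H)⁻¹` is entrywise nonnegative.
-/

open Finset

theorem Matrix.mulVec_nonneg {m n R : Type*} [Fintype n] [Semiring R] [PartialOrder R]
    [IsOrderedRing R] {A : Matrix m n R} (hA : ∀ i j, 0 ≤ A i j) {v : n → R} (hv : 0 ≤ v) :
    0 ≤ A.mulVec v :=
  fun i => sum_nonneg fun j _ => mul_nonneg (hA i j) (hv j)

theorem smul_sub_sum_smul_nonneg {ι n R : Type*} [Ring R] [PartialOrder R] [IsOrderedRing R]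
    {c : R} {V : n → R} {s : Finset ι} {a : ι → R} {W : ι → n → R} (hc : 0 ≤ c) (hV : 0 ≤ V)
    (ha : ∀ j ∈ s, a j ≤ 0) (hW : ∀ j ∈ s, 0 ≤ W j) :
    0 ≤ c • V - ∑ j ∈ s, a j • W j :=
  sub_nonneg.2 <| (sum_nonpos fun j hj => smul_nonpos_of_nonpos_of_nonneg (ha j hj) (hW j hj)).trans
    (smul_nonneg hc hV)

theorem sum_range_pos_of_pos_of_forall_sum_range_succ_pos {R : Type*} [AddCommMonoid R]
    [PartialOrder R] {ω : ℕ → R} (hω0 : 0 < ω 0)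
    (hωsum : ∀ n, 1 ≤ n → 0 < ∑ j ∈ range (n + 1), ω j) {n : ℕ} (hn : 1 ≤ n) :
    0 < ∑ j ∈ range n, ω j := by
  obtain _ | _ | n := n
  · omega
  · simpa using hω0
  · exact hωsum (n + 1) n.succ_pos

theorem fully_discrete_nonnegativity_general {N : ℕ} (H : Matrix (Fin N) (Fin N) ℝ)
    (ω : ℕ → ℝ) (hω0 : 0 < ω 0)
    (hinvnn : ∀ i j, 0 ≤ (ω 0 • (1 : Matrix (Fin N) (Fin N) ℝ) + H)⁻¹ i j)
    (hωneg : ∀ j, 1 ≤ j → ω j < 0)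
    (hωsum : ∀ n, 1 ≤ n → 0 < ∑ j ∈ Finset.range (n + 1), ω j)
    (V : Fin N → ℝ) (hV : ∀ i, 0 ≤ V i)
    (U : ℕ → Fin N → ℝ) (hU0 : U 0 = V)
    (hUn : ∀ n, 1 ≤ n → U n =
      (ω 0 • (1 : Matrix (Fin N) (Fin N) ℝ) + H)⁻¹.mulVec
        ((∑ j ∈ Finset.range n, ω j) • V - ∑ j ∈ Finset.Icc 1 (n - 1), ω (n - j) • U j)) :
    ∀ n i, 0 ≤ U n i := by
  suffices h : ∀ n, 0 ≤ U n from fun n => h n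
  intro n
  induction n using Nat.strong_induction_on with
  | _ n ih =>
    rcases Nat.eq_zero_or_pos n with rfl | hn
    · exact hU0 ▸ hV
    rw [hUn n hn]
    refine Matrix.mulVec_nonneg hinvnn <| smul_sub_sum_smul_nonneg
      (sum_range_pos_of_pos_of_forall_sum_range_succ_pos hω0 hωsum hn).le hV
      (fun j hj => (hωneg _ ?_).le) (fun j hj => ih j ?_) <;>
    · rw [mem_Icc] at hj
      omega

theorem fully_discrete_nonnegativity {N : ℕ} (H : Matrix (Fin N) (Fin N) ℝ)
    (ω : ℕ → ℝ) (hω0 : 0 < ω 0)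
    (hinv : IsUnit (ω 0 • (1 : Matrix (Fin N) (Fin N) ℝ) + H))
    (hinvnn : ∀ i j, 0 ≤ (ω 0 • (1 : Matrix (Fin N) (Fin N) ℝ) + H)⁻¹ i j)
    (hωneg : ∀ j, 1 ≤ j → ω j < 0)
    (hωsum : ∀ n, 1 ≤ n → 0 < ∑ j ∈ Finset.range (n + 1), ω j)
    (V : Fin N → ℝ) (hV : ∀ i, 0 ≤ V i)
    (U : ℕ → Fin N → ℝ) (hU0 : U 0 = V)
    (hUn : ∀ n, 1 ≤ n → U n =
      (ω 0 • (1 : Matrix (Fin N) (Fin N) ℝ) + H)⁻¹.mulVec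
        ((∑ j ∈ Finset.range n, ω j) • V - ∑ j ∈ Finset.Icc 1 (n - 1), ω (n - j) • U j)) :
    ∀ n i, 0 ≤ U n i :=
  fully_discrete_nonnegativity_general H ω hω0 hinvnn hωneg hωsum V hV U hU0 hUn
end

section
/- Let H be a real N×N matrix with h_{ii} > 0 and row diagonal dominance ∑_{j≠i}|h_{ij}| ≤ h_{ii} for all i, let ω₀ > 0, and let {ω_j}_{j≥1} be negative reals with ∑_{j=0}^n ω_j > 0 for all n ≥ 1. Define U^0 = V and U^n = (ω₀ I + H)^{-1}( (∑_{j=0}^{n-1} ω_j) V - ∑_{j=1}^{n-1} ω_{n-j} U^j ) for n ≥ 1. Then ‖U^n‖_∞ ≤ ‖V‖_∞ for every n ≥ 0. -/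
/-! Write `M = ω₀ I + H`. Diagonal dominance of `H` makes `M` dominant with margin `ω₀`, so
`ω₀ ‖x‖_∞ ≤ ‖M x‖_∞` (look at a coordinate where `|x i|` is maximal); hence `M` is invertible and
`‖M⁻¹ y‖_∞ ≤ ω₀⁻¹ ‖y‖_∞`. By strong induction `‖U^j‖_∞ ≤ ‖V‖_∞` for `j < n`; as the weights
`ω_{n-j}` are negative and `∑_{j<n} ω_j > 0`, the right-hand side defining `U^n` has max-norm at
most `(∑_{j<n} ω_j - ∑_{j=1}^{n-1} ω_{n-j}) ‖V‖_∞ = ω₀ ‖V‖_∞`. -/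

open Finset

namespace Matrix

variable {ι : Type*} [Fintype ι] [DecidableEq ι]

theorem add_sum_erase_abs_smul_one_add_le {H : Matrix ι ι ℝ}
    (hH : ∀ i, ∑ j ∈ univ.erase i, |H i j| ≤ H i i) (c : ℝ) (i : ι) :
    c + ∑ j ∈ univ.erase i, |(c • (1 : Matrix ι ι ℝ) + H) i j| ≤ (c • 1 + H) i i := by
  have hoff : ∀ j ∈ univ.erase i, |(c • (1 : Matrix ι ι ℝ) + H) i j| = |H i j| := fun j hj => by
    simp [one_apply_ne (ne_of_mem_erase hj).symm]
  rw [sum_congr rfl hoff]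
  simp only [add_apply, smul_apply, one_apply_eq, smul_eq_mul, mul_one]
  linarith [hH i]

section DominantWithMargin

variable {A : Matrix ι ι ℝ} {c : ℝ} (hA : ∀ i, c + ∑ j ∈ univ.erase i, |A i j| ≤ A i i)
include hA

theorem mul_norm_le_norm_mulVec_of_diag_dominant (x : ι → ℝ) : c * ‖x‖ ≤ ‖A *ᵥ x‖ := by
  rcases isEmpty_or_nonempty ι with hι | hι
  · simp [Subsingleton.elim x 0]
  obtain ⟨i, -, hi⟩ := exists_max_image univ (fun i => |x i|) univ_nonempty
  have hx : ‖x‖ = |x i| := le_antisymm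
    ((pi_norm_le_iff_of_nonneg (abs_nonneg _)).2 fun j => hi j (mem_univ j))
    (norm_le_pi_norm x i)
  have hrow : (A *ᵥ x) i = A i i * x i + ∑ j ∈ univ.erase i, A i j * x j :=
    (add_sum_erase _ _ (mem_univ i)).symm
  have hoff : |∑ j ∈ univ.erase i, A i j * x j| ≤ (∑ j ∈ univ.erase i, |A i j|) * |x i| :=
    calc |∑ j ∈ univ.erase i, A i j * x j| ≤ ∑ j ∈ univ.erase i, |A i j| * |x j| := by
          simpa only [abs_mul] using abs_sum_le_sum_abs (fun j => A i j * x j) (univ.erase i)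
      _ ≤ ∑ j ∈ univ.erase i, |A i j| * |x i| :=
          sum_le_sum fun j _ => mul_le_mul_of_nonneg_left (hi j (mem_univ j)) (abs_nonneg _)
      _ = (∑ j ∈ univ.erase i, |A i j|) * |x i| := by rw [sum_mul]
  calc c * ‖x‖ ≤ (A i i - ∑ j ∈ univ.erase i, |A i j|) * |x i| := by
        rw [hx]; exact mul_le_mul_of_nonneg_right (by linarith [hA i]) (abs_nonneg _)
    _ ≤ |A i i * x i| - |∑ j ∈ univ.erase i, A i j * x j| := by
        rw [abs_mul]; nlinarith [le_abs_self (A i i), abs_nonneg (x i)]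
    _ ≤ |(A *ᵥ x) i| := hrow ▸ abs_sub_abs_le_abs_add _ _
    _ ≤ ‖A *ᵥ x‖ := norm_le_pi_norm (A *ᵥ x) i

theorem isUnit_det_of_diag_dominant (hc : 0 < c) : IsUnit A.det := by
  rw [← isUnit_iff_isUnit_det, ← mulVec_injective_iff_isUnit]
  intro x y hxy
  have h := mul_norm_le_norm_mulVec_of_diag_dominant hA (x - y)
  rw [mulVec_sub, hxy, sub_self, norm_zero] at h
  exact sub_eq_zero.1 (norm_le_zero_iff.1 (nonpos_of_mul_nonpos_right h hc))

theorem mul_norm_inv_mulVec_le_of_diag_dominant (hc : 0 < c) (y : ι → ℝ) :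
    c * ‖A⁻¹ *ᵥ y‖ ≤ ‖y‖ := by
  have h := mul_norm_le_norm_mulVec_of_diag_dominant hA (A⁻¹ *ᵥ y)
  rwa [mulVec_mulVec, mul_nonsing_inv _ (isUnit_det_of_diag_dominant hA hc), one_mulVec] at h

end DominantWithMargin

end Matrix

theorem norm_smul_sub_sum_smul_le {α E : Type*} [SeminormedAddCommGroup E] [NormedSpace ℝ E]
    {s : Finset α} {a : ℝ} (ha : 0 ≤ a) {c : α → ℝ} (hc : ∀ j ∈ s, c j ≤ 0) {v : E} {u : α → E}
    (hu : ∀ j ∈ s, ‖u j‖ ≤ ‖v‖) :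
    ‖a • v - ∑ j ∈ s, c j • u j‖ ≤ (a - ∑ j ∈ s, c j) * ‖v‖ :=
  calc ‖a • v - ∑ j ∈ s, c j • u j‖ ≤ a * ‖v‖ + ∑ j ∈ s, -c j * ‖v‖ := by
        refine (norm_sub_le _ _).trans (add_le_add ?_ ((norm_sum_le _ _).trans ?_))
        · rw [norm_smul, Real.norm_of_nonneg ha]
        · refine sum_le_sum fun j hj => ?_
          rw [norm_smul, Real.norm_of_nonpos (hc j hj)]
          exact mul_le_mul_of_nonneg_left (hu j hj) (neg_nonneg.2 (hc j hj))
    _ = (a - ∑ j ∈ s, c j) * ‖v‖ := by rw [← sum_mul, sum_neg_distrib]; ring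

theorem sum_range_sub_sum_Icc_reflect {M : Type*} [AddCommGroup M] (f : ℕ → M) {n : ℕ}
    (hn : 1 ≤ n) : ∑ j ∈ range n, f j - ∑ j ∈ Icc 1 (n - 1), f (n - j) = f 0 := by
  have hmaps : ∀ j ∈ Icc 1 (n - 1), n - j ∈ Icc 1 (n - 1) := fun j hj => by
    rw [mem_Icc] at *; omega
  have hinv : ∀ j ∈ Icc 1 (n - 1), n - (n - j) = j := fun j hj => by rw [mem_Icc] at hj; omega
  have hreflect : ∑ j ∈ Icc 1 (n - 1), f (n - j) = ∑ j ∈ Icc 1 (n - 1), f j :=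
    sum_nbij' (n - ·) (n - ·) hmaps hmaps hinv hinv fun _ _ => rfl
  have hrange : range n = insert 0 (Icc 1 (n - 1)) := by
    ext j; simp only [mem_range, mem_insert, mem_Icc]; omega
  rw [hreflect, hrange, sum_insert (by simp), add_sub_cancel_right]

theorem fully_discrete_maxnorm_contraction_general {N : ℕ} (H : Matrix (Fin N) (Fin N) ℝ)
    (hdom : ∀ i, ∑ j ∈ Finset.univ.erase i, |H i j| ≤ H i i)
    (ω : ℕ → ℝ) (hω0 : 0 < ω 0)
    (hωneg : ∀ j, 1 ≤ j → ω j < 0)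
    (hωsum : ∀ n, 1 ≤ n → 0 < ∑ j ∈ Finset.range (n + 1), ω j)
    (V : Fin N → ℝ) (U : ℕ → Fin N → ℝ) (hU0 : U 0 = V)
    (hUn : ∀ n, 1 ≤ n → U n =
      (ω 0 • (1 : Matrix (Fin N) (Fin N) ℝ) + H)⁻¹.mulVec
        ((∑ j ∈ Finset.range n, ω j) • V - ∑ j ∈ Finset.Icc 1 (n - 1), ω (n - j) • U j)) :
    ∀ n, ‖U n‖ ≤ ‖V‖ := by
  intro n
  induction n using Nat.strong_induction_on with
  | _ n IH =>
    rcases Nat.eq_zero_or_pos n with rfl | hn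
    · rw [hU0]
    have hS : 0 < ∑ j ∈ range n, ω j := by
      rcases (show n = 1 ∨ 2 ≤ n by omega) with rfl | hn2
      · simpa using hω0
      · simpa [Nat.sub_add_cancel hn] using hωsum (n - 1) (by omega)
    have hrhs : ‖(∑ j ∈ range n, ω j) • V - ∑ j ∈ Icc 1 (n - 1), ω (n - j) • U j‖ ≤ ω 0 * ‖V‖ :=
      calc _ ≤ (∑ j ∈ range n, ω j - ∑ j ∈ Icc 1 (n - 1), ω (n - j)) * ‖V‖ :=
            norm_smul_sub_sum_smul_le hS.le
              (fun j hj => (hωneg _ (by rw [mem_Icc] at hj; omega)).le)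
              (fun j hj => IH j (by rw [mem_Icc] at hj; omega))
        _ = ω 0 * ‖V‖ := by rw [sum_range_sub_sum_Icc_reflect ω hn]
    rw [hUn n hn]
    exact le_of_mul_le_mul_left ((Matrix.mul_norm_inv_mulVec_le_of_diag_dominant
      (Matrix.add_sum_erase_abs_smul_one_add_le hdom (ω 0)) hω0 _).trans hrhs) hω0

theorem fully_discrete_maxnorm_contraction {N : ℕ} (H : Matrix (Fin N) (Fin N) ℝ)
    (hdiag : ∀ i, 0 < H i i)
    (hdom : ∀ i, ∑ j ∈ Finset.univ.erase i, |H i j| ≤ H i i)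
    (ω : ℕ → ℝ) (hω0 : 0 < ω 0)
    (hωneg : ∀ j, 1 ≤ j → ω j < 0)
    (hωsum : ∀ n, 1 ≤ n → 0 < ∑ j ∈ Finset.range (n + 1), ω j)
    (V : Fin N → ℝ) (U : ℕ → Fin N → ℝ) (hU0 : U 0 = V)
    (hUn : ∀ n, 1 ≤ n → U n =
      (ω 0 • (1 : Matrix (Fin N) (Fin N) ℝ) + H)⁻¹.mulVec
        ((∑ j ∈ Finset.range n, ω j) • V - ∑ j ∈ Finset.Icc 1 (n - 1), ω (n - j) • U j)) :
    ∀ n, ‖U n‖ ≤ ‖V‖ :=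
  fully_discrete_maxnorm_contraction_general H hdom ω hω0 hωneg hωsum V U hU0 hUn
end

section
/- Let μ : [0,1] → ℝ be Hölder continuous with exponent γ ∈ (0,1], nonnegative, with μ(0) > 0. Define P(s) = ∫_0^1 s^α μ(α) dα for 0 < s < 1. Then P(s) = -μ(0)/log s + O(|log s|^{-1-γ}) as s → 0⁺; in particular -P(s) log s → μ(0) as s → 0⁺. -/
/-!
Split `μ a = μ 0 + (μ a - μ 0)`. The constant part integrates exactly to `μ 0 (s - 1) / log s`,
which differs from `-μ 0 / log s` by `μ 0 s / log s`, smaller than any power of `|log s|`.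
With `L = -log s`, the Hölder bound `|μ a - μ 0| ≤ C a ^ γ` controls the remainder by
`C ∫₀^∞ a ^ γ e^{-L a} da = C Γ(1 + γ) L ^ (-(1 + γ))`.
-/

open Filter Asymptotics Real Set MeasureTheory Topology
open scoped NNReal

lemma holderOnWith_of_dist_le {X Y : Type*} [PseudoMetricSpace X] [PseudoMetricSpace Y]
    {f : X → Y} {s : Set X} {C r : ℝ≥0}
    (h : ∀ x ∈ s, ∀ y ∈ s, dist (f x) (f y) ≤ C * dist x y ^ (r : ℝ)) :
    HolderOnWith C r f s := by
  intro x hx y hy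
  have := ENNReal.ofReal_le_ofReal (h x hx y hy)
  rwa [ENNReal.ofReal_mul C.coe_nonneg, ENNReal.ofReal_coe_nnreal,
    ← ENNReal.ofReal_rpow_of_nonneg dist_nonneg r.coe_nonneg, ← edist_dist, ← edist_dist] at this

lemma continuousOn_of_abs_sub_le_mul_rpow {f : ℝ → ℝ} {s : Set ℝ} {C γ : ℝ} (hγ : 0 < γ)
    (h : ∀ a ∈ s, ∀ b ∈ s, |f a - f b| ≤ C * |a - b| ^ γ) : ContinuousOn f s := by
  refine HolderOnWith.continuousOn (C := C.toNNReal) (r := γ.toNNReal) ?_ (by simpa using hγ)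
  refine holderOnWith_of_dist_le fun a ha b hb => ?_
  rw [Real.dist_eq, Real.dist_eq, Real.coe_toNNReal _ hγ.le]
  exact (h a ha b hb).trans <|
    mul_le_mul_of_nonneg_right (Real.le_coe_toNNReal C) (rpow_nonneg (abs_nonneg _) γ)

lemma integral_rpow_const_base {s : ℝ} (hs0 : 0 < s) (hs1 : s ≠ 1) :
    ∫ a in (0:ℝ)..1, s ^ a = (s - 1) / log s := by
  have hlog : log s ≠ 0 := log_ne_zero_of_pos_of_ne_one hs0 hs1
  simp_rw [rpow_def_of_pos hs0]
  rw [intervalIntegral.integral_comp_mul_left (fun x => exp x) hlog, integral_exp, mul_zero,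
    mul_one, exp_zero, exp_log hs0, smul_eq_mul, inv_mul_eq_div]

lemma integral_rpow_mul_eq_add {f : ℝ → ℝ} {s : ℝ} (hs0 : 0 < s) (hs1 : s ≠ 1)
    (hf : ContinuousOn f (Icc 0 1)) :
    ∫ a in (0:ℝ)..1, s ^ a * f a =
      f 0 * (s - 1) / log s + ∫ a in (0:ℝ)..1, s ^ a * (f a - f 0) := by
  have hpow : Continuous fun a : ℝ => s ^ a :=
    continuous_const.rpow continuous_id fun _ => Or.inl hs0.ne'
  have hint : IntervalIntegrable (fun a => s ^ a * f a) volume 0 1 :=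
    (hpow.continuousOn.mul (uIcc_of_le (zero_le_one (α := ℝ)) ▸ hf)).intervalIntegrable
  simp_rw [mul_sub]
  rw [intervalIntegral.integral_sub hint ((hpow.intervalIntegrable 0 1).mul_const _),
    intervalIntegral.integral_mul_const, integral_rpow_const_base hs0 hs1]
  ring

lemma isLittleO_div_log_abs_log_rpow (r : ℝ) :
    (fun s : ℝ => s / log s) =o[𝓝[>] 0] fun s => |log s| ^ r := by
  have habs : Tendsto (fun s => |log s|) (𝓝[>] 0) atTop :=
    tendsto_abs_atBot_atTop.comp tendsto_log_nhdsGT_zero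
  have hid : (fun s : ℝ => s) =o[𝓝[>] 0] fun s => |log s| ^ r := by
    refine ((isLittleO_exp_neg_mul_rpow_atTop one_pos r).comp_tendsto habs).congr' ?_ .rfl
    filter_upwards [Ioo_mem_nhdsGT one_pos] with s hs
    rw [Function.comp_apply, abs_of_neg (log_neg hs.1 hs.2), neg_one_mul, neg_neg, exp_log hs.1]
  have hinv : (fun s => (log s)⁻¹) =O[𝓝[>] 0] fun _ => (1 : ℝ) :=
    (tendsto_inv_atBot_zero.comp tendsto_log_nhdsGT_zero).isBigO_one ℝ
  simpa only [div_eq_mul_inv, mul_one] using hid.mul_isBigO hinv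

lemma abs_integral_rpow_mul_le {f : ℝ → ℝ} {s γ C : ℝ} (hs0 : 0 < s) (hs1 : s < 1)
    (hγ : -1 < γ) (hf : ∀ a ∈ Ioc (0:ℝ) 1, |f a| ≤ C * a ^ γ) :
    |∫ a in (0:ℝ)..1, s ^ a * f a| ≤ C * Gamma (1 + γ) * (-log s) ^ (-(1 + γ)) := by
  have hL : 0 < -log s := neg_pos.2 (log_neg hs0 hs1)
  have hC : 0 ≤ C := by simpa using (abs_nonneg _).trans (hf 1 (right_mem_Ioc.2 one_pos))
  set g : ℝ → ℝ := fun a => C * (a ^ γ * exp (log s * a))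
  have hgint : IntegrableOn g (Ioi 0) := by
    have := integrableOn_rpow_mul_exp_neg_mul_rpow (p := 1) hγ one_pos hL
    simp only [Real.rpow_one, neg_neg] at this
    exact this.const_mul C
  have hfg : ∀ a ∈ Ioc (0:ℝ) 1, ‖s ^ a * f a‖ ≤ g a := by
    intro a ha
    rw [norm_mul, norm_of_nonneg (rpow_nonneg hs0.le a), rpow_def_of_pos hs0, Real.norm_eq_abs]
    show _ ≤ C * (a ^ γ * exp (log s * a))
    rw [← mul_assoc, mul_comm]
    exact mul_le_mul_of_nonneg_right (hf a ha) (exp_pos _).le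
  rw [← Real.norm_eq_abs]
  calc ‖∫ a in (0:ℝ)..1, s ^ a * f a‖
      ≤ ∫ a in (0:ℝ)..1, g a :=
        intervalIntegral.norm_integral_le_of_norm_le zero_le_one
          (ae_of_all _ hfg)
          ((intervalIntegrable_iff_integrableOn_Ioc_of_le zero_le_one).2
            (hgint.mono_set Ioc_subset_Ioi_self))
    _ ≤ ∫ a in Ioi 0, g a := by
        rw [intervalIntegral.integral_of_le zero_le_one]
        refine setIntegral_mono_set hgint ?_ Ioc_subset_Ioi_self.eventuallyLE
        filter_upwards [ae_restrict_mem measurableSet_Ioi] with a ha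
        have := rpow_nonneg (le_of_lt ha) γ
        positivity
    _ = C * Gamma (1 + γ) * (-log s) ^ (-(1 + γ)) := by
        have := integral_rpow_mul_exp_neg_mul_Ioi (a := 1 + γ) (by linarith) hL
        simp only [add_sub_cancel_left, neg_mul, neg_neg] at this
        rw [integral_const_mul, this, one_div, inv_rpow hL.le, ← rpow_neg hL.le]
        ring

lemma isBigO_integral_rpow_mul {f : ℝ → ℝ} {γ C : ℝ} (hγ : -1 < γ)
    (hf : ∀ a ∈ Ioc (0:ℝ) 1, |f a| ≤ C * a ^ γ) :
    (fun s : ℝ => ∫ a in (0:ℝ)..1, s ^ a * f a) =O[𝓝[>] 0] fun s => |log s| ^ (-(1 + γ)) := by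
  refine .of_bound (C * Gamma (1 + γ)) ?_
  filter_upwards [Ioo_mem_nhdsGT one_pos] with s hs
  rw [Real.norm_eq_abs, Real.norm_eq_abs, abs_of_nonneg (rpow_nonneg (abs_nonneg _) _),
    abs_of_neg (log_neg hs.1 hs.2)]
  exact abs_integral_rpow_mul_le hs.1 hs.2 hγ hf

lemma tendsto_mul_log_of_isBigO {E : ℝ → ℝ} {γ : ℝ} (hγ : 0 < γ)
    (hE : E =O[𝓝[>] 0] fun s => |log s| ^ (-(1 + γ))) :
    Tendsto (fun s => E s * log s) (𝓝[>] 0) (𝓝 0) := by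
  have hlim : Tendsto (fun s => |log s| ^ (-γ)) (𝓝[>] 0) (𝓝 0) :=
    (tendsto_rpow_neg_atTop hγ).comp (tendsto_abs_atBot_atTop.comp tendsto_log_nhdsGT_zero)
  refine (hE.mul (isBigO_refl log _)).trans_tendsto (neg_zero (G := ℝ) ▸ hlim.neg |>.congr' ?_)
  filter_upwards [Ioo_mem_nhdsGT one_pos] with s hs
  have hlog : log s < 0 := log_neg hs.1 hs.2
  calc -|log s| ^ (-γ) = -|log s| ^ (-(1 + γ) + 1) := by ring_nf
    _ = |log s| ^ (-(1 + γ)) * log s := by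
        rw [rpow_add_one (abs_ne_zero.2 hlog.ne), abs_of_neg hlog]
        ring

theorem distributed_order_P_at_zero_general (γ : ℝ) (hγ : γ ∈ Set.Ioc (0:ℝ) 1)
    (μ : ℝ → ℝ) (C : ℝ)
    (hholder : ∀ a ∈ Set.Icc (0:ℝ) 1, ∀ c ∈ Set.Icc (0:ℝ) 1, |μ a - μ c| ≤ C * |a - c| ^ γ) :
    ((fun s : ℝ => (∫ a in (0:ℝ)..1, s ^ a * μ a) + μ 0 / Real.log s)
        =O[nhdsWithin (0:ℝ) (Set.Ioi 0)] fun s : ℝ => |Real.log s| ^ (-(1 + γ))) ∧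
      Tendsto (fun s : ℝ => -((∫ a in (0:ℝ)..1, s ^ a * μ a) * Real.log s))
        (nhdsWithin (0:ℝ) (Set.Ioi 0)) (nhds (μ 0)) := by
  have hγ0 : 0 < γ := hγ.1
  have hR := isBigO_integral_rpow_mul (f := fun a => μ a - μ 0) (by linarith) fun a ha => by
    simpa [abs_of_pos ha.1] using hholder a (Ioc_subset_Icc_self ha) 0 (left_mem_Icc.2 zero_le_one)
  have hsplit : ∀ᶠ s in 𝓝[>] (0:ℝ), μ 0 * (s / log s) + ∫ a in (0:ℝ)..1, s ^ a * (μ a - μ 0) =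
      (∫ a in (0:ℝ)..1, s ^ a * μ a) + μ 0 / log s := by
    filter_upwards [Ioo_mem_nhdsGT one_pos] with s hs
    rw [integral_rpow_mul_eq_add hs.1 hs.2.ne (continuousOn_of_abs_sub_le_mul_rpow hγ0 hholder)]
    ring
  have hO := (((isLittleO_div_log_abs_log_rpow (-(1 + γ))).isBigO.const_mul_left (μ 0)).add
    hR).congr' hsplit .rfl
  refine ⟨hO, ?_⟩
  have hlim := (tendsto_mul_log_of_isBigO hγ0 hO).const_sub (μ 0)
  rw [sub_zero] at hlim
  refine hlim.congr' ?_
  filter_upwards [Ioo_mem_nhdsGT one_pos] with s hs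
  have hlog : log s ≠ 0 := (log_neg hs.1 hs.2).ne
  field_simp
  ring

theorem distributed_order_P_at_zero (γ : ℝ) (hγ : γ ∈ Set.Ioc (0:ℝ) 1)
    (μ : ℝ → ℝ) (C : ℝ)
    (hholder : ∀ a ∈ Set.Icc (0:ℝ) 1, ∀ c ∈ Set.Icc (0:ℝ) 1, |μ a - μ c| ≤ C * |a - c| ^ γ)
    (hnonneg : ∀ a ∈ Set.Icc (0:ℝ) 1, 0 ≤ μ a) (hμ0 : 0 < μ 0) :
    ((fun s : ℝ => (∫ a in (0:ℝ)..1, s ^ a * μ a) + μ 0 / Real.log s)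
        =O[nhdsWithin (0:ℝ) (Set.Ioi 0)] fun s : ℝ => |Real.log s| ^ (-(1 + γ))) ∧
      Tendsto (fun s : ℝ => -((∫ a in (0:ℝ)..1, s ^ a * μ a) * Real.log s))
        (nhdsWithin (0:ℝ) (Set.Ioi 0)) (nhds (μ 0)) :=
  distributed_order_P_at_zero_general γ hγ μ C hholder
end
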